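/- arXiv:1807.01808 — 3 statements merged into one kernel-verified Lean document; each statement's English description precedes it below -/
import Mathlib

section
/- For all n ≥ 10 and 3 ≤ k ≤ ⌊n/2⌋, the unnormalized Ising level weight satisfies π̂_k ≤ exp(−0.5·k·ln(k/e)) = (e/k)^{k/2}. -/
/-!
`C(n,k) ≤ (e n / k)^k` (from `k^k / k! ≤ e^k`), and since `n - k ≥ n / 2` the exponential factor
is at most `n^{-k}`; hence `π̂_k ≤ (e / k)^k = exp(-k ln(k/e))`. For `k ≥ 3 > e` the exponent
`-k ln(k/e)` is nonpositive, so halving it only weakens the bound.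
-/

open Real

theorem Nat.choose_le_exp_one_mul_div_pow (n k : ℕ) :
    (n.choose k : ℝ) ≤ (exp 1 * n / k) ^ k := by
  have hkk : (0 : ℝ) < (k : ℝ) ^ k := by
    rcases k.eq_zero_or_pos with rfl | hk
    · simp
    · positivity
  have hfact : (k : ℝ) ^ k / k.factorial ≤ exp k := pow_div_factorial_le_exp _ k.cast_nonneg k
  calc (n.choose k : ℝ) ≤ n ^ k / k.factorial := Nat.choose_le_pow_div k n
    _ ≤ n ^ k * (exp k / k ^ k) := by
      rw [div_eq_mul_inv]
      gcongr
      rwa [le_div_iff₀ hkk, inv_mul_eq_div]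
    _ = (exp 1 * n / k) ^ k := by rw [div_pow, mul_pow, ← exp_nat_mul, mul_one]; ring

theorem exp_neg_two_log_div_mul_le_inv_pow {n k : ℕ} (hkn : 2 * k ≤ n) :
    exp (-(2 * log n / n) * k * (n - k : ℝ)) ≤ ((n : ℝ) ^ k)⁻¹ := by
  rcases n.eq_zero_or_pos with rfl | hn
  · simp [show k = 0 by omega]
  have hnR : (0 : ℝ) < n := by exact_mod_cast hn
  have hhalf : (n : ℝ) / 2 ≤ n - k := by
    have : (2 * k : ℝ) ≤ n := by exact_mod_cast hkn
    linarith
  have hlog : 0 ≤ log n := log_nonneg (by exact_mod_cast hn)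
  calc exp (-(2 * log n / n) * k * (n - k : ℝ)) ≤ exp (-(2 * log n / n) * k * (n / 2)) := by
        have hrate : 0 ≤ 2 * log n / n * k := by positivity
        gcongr exp ?_
        nlinarith
    _ = ((n : ℝ) ^ k)⁻¹ := by
      rw [← exp_log (pow_pos hnR k), ← exp_neg, log_pow]
      congr 1
      field_simp

/-- The unnormalized Ising level weight `π̂_k`. -/
noncomputable def isingWeight (n k : ℕ) : ℝ :=
  n.choose k * exp (-(2 * log n / n) * k * (n - k : ℝ))

theorem isingWeight_le_exp_one_div_pow {n k : ℕ} (hkn : 2 * k ≤ n) :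
    isingWeight n k ≤ (exp 1 / k) ^ k := by
  have hpow : (n : ℝ) ^ k ≠ 0 := by
    rcases k.eq_zero_or_pos with rfl | hk
    · simp
    · exact pow_ne_zero _ (by exact_mod_cast (by omega : n ≠ 0))
  calc isingWeight n k ≤ (exp 1 * n / k) ^ k * ((n : ℝ) ^ k)⁻¹ :=
        mul_le_mul (Nat.choose_le_exp_one_mul_div_pow n k)
          (exp_neg_two_log_div_mul_le_inv_pow hkn) (exp_pos _).le (by positivity)
    _ = (exp 1 / k) ^ k := by rw [mul_div_right_comm, mul_pow, mul_inv_cancel_right₀ hpow]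

theorem ising_weight_small_general (n k : ℕ) (hk : 3 ≤ k) (hk2 : k ≤ n / 2) :
    (n.choose k : ℝ) * Real.exp (-(2 * Real.log n / n) * k * (n - k : ℝ)) ≤
      Real.exp (-0.5 * k * Real.log ((k : ℝ) / Real.exp 1)) := by
  have hkpos : (0 : ℝ) < k := by positivity
  have hke : exp 1 ≤ k :=
    (exp_one_lt_d9.trans (by norm_num)).le.trans (by exact_mod_cast hk : (3 : ℝ) ≤ k)
  have hlog : 0 ≤ log (k / exp 1) := log_nonneg ((one_le_div (exp_pos 1)).mpr hke)
  calc _ ≤ (exp 1 / k) ^ k := isingWeight_le_exp_one_div_pow (by omega)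
    _ = exp (-(k * log (k / exp 1))) := by
      rw [exp_neg, exp_nat_mul, exp_log (div_pos hkpos (exp_pos 1)), ← inv_pow, inv_div]
    _ ≤ exp (-0.5 * k * log (k / exp 1)) := by
      gcongr exp ?_
      nlinarith

/-- For `n ≥ 10` and `3 ≤ k ≤ ⌊n/2⌋`, the unnormalized Ising level weight satisfies
`π̂_k ≤ exp(-0.5 k ln(k/e))`. -/
theorem ising_weight_small (n k : ℕ) (hn : 10 ≤ n) (hk : 3 ≤ k) (hk2 : k ≤ n / 2) :
    (n.choose k : ℝ) * Real.exp (-(2 * Real.log n / n) * k * (n - k : ℝ)) ≤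
      Real.exp (-0.5 * k * Real.log ((k : ℝ) / Real.exp 1)) :=
  ising_weight_small_general n k hk hk2
end

section
/- For all n ≥ 1, the normalizer Z₁ = (1 + exp(−(2 ln(n)/n)·(n−1)))^n of the first mixture component satisfies Z₁ ≤ 3. -/
/-!
For `n ≥ 2` the exponent `-(2 log n / n)(n - 1)` is at most `-log n`, so `Z₁ ≤ (1 + 1/n)^n ≤ e < 3`;
the cases `n ≤ 1` are computed directly.
-/

open Real

lemma exp_neg_two_mul_log_div_mul_sub_one_le_inv {x : ℝ} (hx : 2 ≤ x) :
    exp (-(2 * log x / x) * (x - 1)) ≤ x⁻¹ := by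
  have hx₀ : 0 < x := by linarith
  have hlog : 0 ≤ log x := log_nonneg (by linarith)
  have hexponent : -(2 * log x / x) * (x - 1) ≤ -log x := by
    rw [neg_mul, neg_le_neg_iff, div_mul_eq_mul_div, le_div_iff₀ hx₀]
    nlinarith [mul_nonneg hlog (sub_nonneg.mpr hx)]
  calc exp (-(2 * log x / x) * (x - 1)) ≤ exp (-log x) := exp_le_exp.mpr hexponent
    _ = x⁻¹ := by rw [exp_neg, exp_log hx₀]

theorem Z1_le_three_general (n : ℕ) :
    (1 + Real.exp (-(2 * Real.log n / n) * ((n : ℝ) - 1))) ^ n ≤ 3 := by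
  obtain hn | hn : n ≤ 1 ∨ 2 ≤ n := by omega
  · interval_cases n <;> norm_num
  have hexp : exp (-(2 * log n / n) * ((n : ℝ) - 1)) ≤ (n : ℝ)⁻¹ :=
    exp_neg_two_mul_log_div_mul_sub_one_le_inv (by exact_mod_cast hn)
  calc (1 + exp (-(2 * log n / n) * ((n : ℝ) - 1))) ^ n
      ≤ (1 + (n : ℝ)⁻¹) ^ n := pow_le_pow_left₀ (by positivity) (by linarith) n
    _ ≤ exp 1 := one_add_inv_pow_le_exp
    _ ≤ 3 := exp_one_lt_three.le

/-- For all `n ≥ 1`, `Z₁ = (1 + exp(-(2 ln n / n)(n-1)))^n ≤ 3`. -/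
theorem Z1_le_three (n : ℕ) (hn : 1 ≤ n) :
    (1 + Real.exp (-(2 * Real.log n / n) * ((n : ℝ) - 1))) ^ n ≤ 3 :=
  Z1_le_three_general n
end

section
/- The marginal-gain modular function along a permutation is a subgradient of a submodular function at every prefix: let F be submodular on 2^V with F(∅)=0, σ a permutation of V = {1,…,n}, and define m_v = F(A_{σ,v} ∪ {v}) − F(A_{σ,v}) where A_{σ,v} is the set of elements preceding v in σ. Then for every prefix S_k = {σ(1),…,σ(k)} (0 ≤ k ≤ n), m(S_k) = F(S_k), and for every R ⊆ V, F(R) ≥ F(S_k) + m(R) − m(S_k), i.e., F(R) ≥ m(R). -/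
open Finset

/-- The prefix `{σ(1),…,σ(k)}` of a permutation `σ` of `{1,…,n}`. -/
def permPrefix {n : ℕ} (σ : Equiv.Perm (Fin n)) (k : ℕ) : Finset (Fin n) :=
  Finset.univ.filter (fun w => (σ.symm w : ℕ) < k)

/-- The marginal-gain modular weights along a permutation:
`m_v = F(A_{σ,v} ∪ {v}) - F(A_{σ,v})`, where `A_{σ,v}` is the set of
elements preceding `v` in `σ`. -/
def marginalGain {n : ℕ} (F : Finset (Fin n) → ℝ) (σ : Equiv.Perm (Fin n))
    (v : Fin n) : ℝ :=
  F (insert v (permPrefix σ (σ.symm v))) - F (permPrefix σ (σ.symm v))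

/-! Along the chain of prefixes `∅ = S₀ ⊂ S₁ ⊂ ⋯ ⊂ Sₙ = V`, the weight of `σ(k+1)` is the increment
`F(S_{k+1}) - F(S_k)`, so the sum over a prefix telescopes to `F(S_k)`. For an arbitrary `R`, walk
along the same chain and add `σ(k+1)` to `R ∩ S_k` whenever it lies in `R`: since `R ∩ S_k ⊆ S_k`,
diminishing returns make the increment of `F` at least the weight of `σ(k+1)`, and after `n` steps
this gives `m(R) ≤ F(R)`. -/

def DiminishingReturns {α : Type*} [DecidableEq α] (F : Finset α → ℝ) : Prop :=
  ∀ S R : Finset α, S ⊆ R → ∀ v ∉ R, F (insert v R) - F R ≤ F (insert v S) - F S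

section permPrefix

variable {n : ℕ} (σ : Equiv.Perm (Fin n))

lemma permPrefix_zero : permPrefix σ 0 = ∅ := by
  simp [permPrefix]

lemma permPrefix_self : permPrefix σ n = univ := by
  ext w
  simp [permPrefix]

lemma apply_notMem_permPrefix (k : ℕ) (hk : k < n) : σ ⟨k, hk⟩ ∉ permPrefix σ k := by
  simp [permPrefix]

lemma permPrefix_succ (k : ℕ) (hk : k < n) :
    permPrefix σ (k + 1) = insert (σ ⟨k, hk⟩) (permPrefix σ k) := by
  ext w
  simp only [permPrefix, mem_filter, mem_univ, true_and, mem_insert, Nat.lt_succ_iff_lt_or_eq,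
    ← Equiv.symm_apply_eq, Fin.ext_iff]
  exact or_comm

lemma marginalGain_apply (F : Finset (Fin n) → ℝ) (k : ℕ) (hk : k < n) :
    marginalGain F σ (σ ⟨k, hk⟩) = F (permPrefix σ (k + 1)) - F (permPrefix σ k) := by
  simp [marginalGain, permPrefix_succ σ k hk]

end permPrefix

section marginalGain

variable {n : ℕ} (F : Finset (Fin n) → ℝ) (σ : Equiv.Perm (Fin n))

lemma sum_marginalGain_permPrefix (hF0 : F ∅ = 0) :
    ∀ k ≤ n, ∑ v ∈ permPrefix σ k, marginalGain F σ v = F (permPrefix σ k) := by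
  intro k hk
  induction k with
  | zero => simp [permPrefix_zero, hF0]
  | succ k ih =>
    rw [permPrefix_succ σ k hk, sum_insert (apply_notMem_permPrefix σ k hk),
      marginalGain_apply, ih (Nat.le_of_succ_le hk), permPrefix_succ σ k hk]
    ring

lemma marginalGain_apply_le (hsub : DiminishingReturns F) (k : ℕ) (hk : k < n)
    {T : Finset (Fin n)} (hT : T ⊆ permPrefix σ k) :
    marginalGain F σ (σ ⟨k, hk⟩) ≤ F (insert (σ ⟨k, hk⟩) T) - F T := by
  rw [marginalGain_apply, permPrefix_succ σ k hk]
  exact hsub T _ hT _ (apply_notMem_permPrefix σ k hk)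

lemma sum_marginalGain_inter_permPrefix_le (hF0 : F ∅ = 0) (hsub : DiminishingReturns F)
    (R : Finset (Fin n)) :
    ∀ k ≤ n, ∑ v ∈ R ∩ permPrefix σ k, marginalGain F σ v ≤ F (R ∩ permPrefix σ k) := by
  intro k hk
  induction k with
  | zero => simp [permPrefix_zero, hF0]
  | succ k ih =>
    set x := σ ⟨k, hk⟩
    have hx : x ∉ permPrefix σ k := apply_notMem_permPrefix σ k hk
    rw [permPrefix_succ σ k hk]
    by_cases hxR : x ∈ R
    · have hgain := marginalGain_apply_le F σ hsub k hk (inter_subset_right (s₁ := R))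
      rw [inter_insert_of_mem hxR, sum_insert fun h => hx (mem_of_mem_inter_right h)]
      linarith [ih (Nat.le_of_succ_le hk)]
    · rw [inter_insert_of_notMem hxR]
      exact ih (Nat.le_of_succ_le hk)

lemma sum_marginalGain_le (hF0 : F ∅ = 0) (hsub : DiminishingReturns F) (R : Finset (Fin n)) :
    ∑ v ∈ R, marginalGain F σ v ≤ F R := by
  simpa [permPrefix_self] using sum_marginalGain_inter_permPrefix_le F σ hF0 hsub R n le_rfl

end marginalGain

/-- The marginal-gain modular function along a permutation is a subgradient of a
submodular function (with `F(∅)=0`) at every prefix: it agrees with `F` on all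
prefixes, and lower-bounds `F` everywhere. -/
theorem marginal_gain_subgradient {n : ℕ} (F : Finset (Fin n) → ℝ)
    (σ : Equiv.Perm (Fin n))
    (hF0 : F ∅ = 0)
    (hsub : ∀ S R : Finset (Fin n), S ⊆ R → ∀ v ∉ R,
      F (insert v R) - F R ≤ F (insert v S) - F S) :
    (∀ k ≤ n, ∑ v ∈ permPrefix σ k, marginalGain F σ v = F (permPrefix σ k)) ∧
    (∀ R : Finset (Fin n), ∑ v ∈ R, marginalGain F σ v ≤ F R) :=
  ⟨sum_marginalGain_permPrefix F σ hF0, sum_marginalGain_le F σ hF0 hsub⟩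
end
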